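/- Let P be a poset and M a P-persistence module that is projective of finite rank. Then there is exactly one finitely supported function β : P → ℕ such that M is isomorphic to the direct sum over r ∈ P of β(r) copies of the indicator projective P_r. -/

import Mathlib

/-- A `P`-persistence module: a functor `P → Vec_k`, given explicitly. -/
structure PersMod (P : Type) [PartialOrder P] (k : Type) [Field k] : Type 1 where
  obj : P → Type
  [acg : ∀ r, AddCommGroup (obj r)]
  [mod : ∀ r, Module k (obj r)]
  map : ∀ {r s : P}, r ≤ s → (obj r →ₗ[k] obj s)
  map_refl : ∀ (r : P) (x : obj r), map (le_refl r) x = x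
  map_trans : ∀ {r s t : P} (h1 : r ≤ s) (h2 : s ≤ t) (x : obj r),
    map h2 (map h1 x) = map (le_trans h1 h2) x

attribute [instance] PersMod.acg PersMod.mod

variable {P : Type} [PartialOrder P]

/-- A morphism of persistence modules: a natural transformation. -/
structure PersHom (k : Type) [Field k] (M N : PersMod P k) where
  app : ∀ r : P, M.obj r →ₗ[k] N.obj r
  nat : ∀ {r s : P} (h : r ≤ s) (x : M.obj r),
    app s (M.map h x) = N.map h (app r x)

/-- The finite direct sum of indicator projectives `⊕_{i ∈ I} P_{f i}`:
at grade `r` it is the free vector space on `{i // f i ≤ r}`, with structure maps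
induced by the inclusions of index sets.  For `I = Unit` this is the indicator
projective `P_{f ()}` itself. -/
noncomputable def freePers (k : Type) [Field k] (I : Type) (f : I → P) : PersMod P k where
  obj r := {i : I // f i ≤ r} →₀ k
  map h := Finsupp.lmapDomain k k fun i => ⟨i.1, le_trans i.2 h⟩
  map_refl r x := by
    rw [Finsupp.lmapDomain_apply,
      show (fun i : {i : I // f i ≤ r} => (⟨i.1, le_trans i.2 (le_refl r)⟩ :
        {i : I // f i ≤ r})) = id from rfl, Finsupp.mapDomain_id]
  map_trans h1 h2 x := by
    rw [Finsupp.lmapDomain_apply, Finsupp.lmapDomain_apply, Finsupp.lmapDomain_apply,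
      ← Finsupp.mapDomain_comp]
    rfl

/-- A morphism of persistence modules is surjective if it is so at every grade. -/
def PersHom.Surj {k : Type} [Field k] {M N : PersMod P k} (g : PersHom k M N) : Prop :=
  ∀ r : P, Function.Surjective (g.app r)

/-- Isomorphism of persistence modules: a family of linear equivalences commuting
with the structure maps. -/
def PersIso (k : Type) [Field k] (M N : PersMod P k) : Prop :=
  ∃ ε : ∀ r : P, M.obj r ≃ₗ[k] N.obj r,
    ∀ {r s : P} (h : r ≤ s) (x : M.obj r), ε s (M.map h x) = N.map h (ε r x)

/-- Index type for `⊕_{r ∈ P} P_r^{β r}`, for a finitely supported `β : P →₀ ℕ`. -/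
def bettiIndex (β : P →₀ ℕ) : Type := Σ p : β.support, Fin (β p.1)

instance (β : P →₀ ℕ) : Fintype (bettiIndex β) := by unfold bettiIndex; infer_instance

/-- `β` is a Betti table for `M` if `M ≅ ⊕_{r ∈ P} P_r^{β r}`. -/
def IsBettiTable (k : Type) [Field k] (M : PersMod P k) (β : P →₀ ℕ) : Prop :=
  PersIso k M (freePers k (bettiIndex β) fun x => x.1.1)

/-!
The invariant is the number of generators born at `p`: the dimension of `M_p` modulo the images
of all `M_q` with `q < p`. It is preserved by isomorphisms, and for `⊕_i P_{f i}` the images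
from below span exactly the basis vectors with `f i < p`, so it counts the `i` with `f i = p`.
Hence any Betti table of `M` is this invariant; conversely, regrouping the summands of a given
decomposition by their grade produces one.
-/

open Module Finsupp

namespace Finsupp

theorem range_lmapDomain_eq_supported {α α' R : Type*} (M : Type*) [Semiring R]
    [AddCommMonoid M] [Module R M] (g : α → α') :
    LinearMap.range (lmapDomain M R g) = supported M R (Set.range g) := by
  rw [LinearMap.range_eq_map, ← supported_univ, lmapDomain_supported, Set.image_univ]

theorem finrank_quotient_supported (k : Type*) [Field k] {α : Type*} [Finite α] (s : Set α) :
    finrank k ((α →₀ k) ⧸ supported k k s) = Nat.card ↥sᶜ := by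
  classical
  have := Fintype.ofFinite α
  have h := (supported k k s).finrank_quotient_add_finrank
  rw [(supportedEquivFinsupp s).finrank_eq, finrank_finsupp_self, finrank_finsupp_self] at h
  rw [Nat.card_eq_fintype_card, Fintype.card_compl_set]
  omega

end Finsupp

theorem PersIso.trans {k : Type} [Field k] {M N O : PersMod P k}
    (h₁ : PersIso k M N) (h₂ : PersIso k N O) : PersIso k M O := by
  obtain ⟨ε, hε⟩ := h₁
  obtain ⟨δ, hδ⟩ := h₂
  exact ⟨fun r => (ε r).trans (δ r), fun h x => by simp [hε h, hδ h]⟩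

theorem persIso_freePers_of_equiv (k : Type) [Field k] {I J : Type} (e : I ≃ J) {f : I → P}
    {g : J → P} (hfg : ∀ i, g (e i) = f i) : PersIso k (freePers k I f) (freePers k J g) := by
  refine ⟨fun r => Finsupp.domLCongr (e.subtypeEquiv fun i => by rw [hfg]),
    fun {r _} h (x : {i // f i ≤ r} →₀ k) => ?_⟩
  change equivMapDomain _ (mapDomain _ x) = mapDomain _ (equivMapDomain _ x)
  rw [equivMapDomain_eq_mapDomain, equivMapDomain_eq_mapDomain, ← mapDomain_comp,
    ← mapDomain_comp]
  rfl

namespace PersMod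

variable {k : Type} [Field k]

def radical (M : PersMod P k) (p : P) : Submodule k (M.obj p) :=
  ⨆ q : {q : P // q < p}, LinearMap.range (M.map q.2.le)

noncomputable def betti (M : PersMod P k) (p : P) : ℕ :=
  finrank k (M.obj p ⧸ M.radical p)

theorem radical_freePers (I : Type) (f : I → P) (p : P) :
    (freePers k I f).radical p = supported k k {i | f i.1 < p} := by
  have hrange (q : {q // q < p}) : LinearMap.range ((freePers k I f).map q.2.le) =
      supported k k (Set.range fun j : {j // f j ≤ q.1} => (⟨j.1, j.2.trans q.2.le⟩ :
        {i // f i ≤ p})) :=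
    range_lmapDomain_eq_supported k _
  rw [radical, iSup_congr hrange]
  refine (supported_iUnion _).symm.trans (congrArg _ ?_)
  ext i
  simp only [Set.mem_iUnion, Set.mem_range, Set.mem_ofPred_eq]
  constructor
  · rintro ⟨q, j, rfl⟩
    exact lt_of_le_of_lt j.2 q.2
  · intro hi
    exact ⟨⟨f i.1, hi⟩, ⟨i.1, le_rfl⟩, rfl⟩

theorem betti_freePers (I : Type) [Finite I] (f : I → P) (p : P) :
    (freePers k I f).betti p = Nat.card {i // f i = p} := by
  rw [betti, radical_freePers]
  refine (finrank_quotient_supported k _).trans (Nat.card_congr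
    { toFun := fun i => ⟨i.1.1, i.1.2.eq_of_not_lt i.2⟩
      invFun := fun i => ⟨⟨i.1, i.2.le⟩, fun h => h.ne i.2⟩
      left_inv := fun _ => rfl
      right_inv := fun _ => rfl })

end PersMod

theorem PersIso.betti_eq {k : Type} [Field k] {M N : PersMod P k} (h : PersIso k M N) (p : P) :
    M.betti p = N.betti p := by
  obtain ⟨ε, hε⟩ := h
  have hrad : (M.radical p).map (ε p).toLinearMap = N.radical p := by
    rw [PersMod.radical, Submodule.map_iSup]
    refine iSup_congr fun q => ?_
    have hcomm : (ε p).toLinearMap ∘ₗ M.map q.2.le = N.map q.2.le ∘ₗ (ε q.1).toLinearMap :=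
      LinearMap.ext (hε q.2.le)
    rw [← LinearMap.range_comp, hcomm, LinearMap.range_comp, LinearEquiv.range, Submodule.map_top]
  exact (Submodule.Quotient.equiv _ _ (ε p) hrad).finrank_eq

def sigmaFinEquivBettiIndex {α : Type} (β : α →₀ ℕ) : (Σ a : α, Fin (β a)) ≃ bettiIndex β where
  toFun x := ⟨⟨x.1, mem_support_iff.2 x.2.pos.ne'⟩, x.2⟩
  invFun y := ⟨y.1.1, y.2⟩
  left_inv _ := rfl
  right_inv _ := rfl

theorem card_bettiIndex_fiber {α : Type} (β : α →₀ ℕ) (a : α) :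
    Nat.card {x : bettiIndex β // x.1.1 = a} = β a := by
  rw [Nat.card_congr ((((sigmaFinEquivBettiIndex β).subtypeEquiv fun _ => Iff.rfl).symm).trans
    (Equiv.sigmaSubtype a)), Nat.card_fin]

theorem IsBettiTable.betti_eq {k : Type} [Field k] {M : PersMod P k} {β : P →₀ ℕ}
    (h : IsBettiTable k M β) (p : P) : M.betti p = β p := by
  rw [PersIso.betti_eq h p, PersMod.betti_freePers, card_bettiIndex_fiber]

noncomputable def fiberCard {α I : Type*} [Finite I] (f : I → α) : α →₀ ℕ :=
  ofSupportFinite (fun a => Nat.card {i // f i = a}) <| (Set.finite_range f).subset fun _ ha =>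
    have ⟨⟨i, hi⟩⟩ := (Nat.card_ne_zero.1 ha).1
    ⟨i, hi⟩

noncomputable def equivBettiIndexFiberCard {I : Type} [Finite I] (f : I → P) :
    I ≃ bettiIndex (fiberCard f) :=
  ((Equiv.sigmaFiberEquiv f).symm.trans
    (Equiv.sigmaCongrRight fun p => Finite.equivFin {i // f i = p})).trans
    (sigmaFinEquivBettiIndex (fiberCard f))

theorem isBettiTable_fiberCard {k : Type} [Field k] {M : PersMod P k} {I : Type} [Finite I]
    {f : I → P} (h : PersIso k M (freePers k I f)) : IsBettiTable k M (fiberCard f) :=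
  h.trans (persIso_freePers_of_equiv k (equivBettiIndexFiberCard f) fun _ => rfl)

theorem betti_table_unique (k : Type) [Field k] (M : PersMod P k)
    (hM : ∃ (I : Type) (_ : Fintype I) (f : I → P), PersIso k M (freePers k I f)) :
    ∃! β : P →₀ ℕ, IsBettiTable k M β := by
  obtain ⟨I, _, f, hMf⟩ := hM
  refine ⟨fiberCard f, isBettiTable_fiberCard hMf, fun β hβ => ?_⟩
  ext p
  rw [← hβ.betti_eq, (isBettiTable_fiberCard hMf).betti_eq]
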